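/- Suppose C(t) is nonempty, closed and convex for every t ∈ [0,T], A₁ = 0, and ⟨f(t), x⟩ = 0 for every t ∈ [0,T] and every x ∈ ker A₀. Then for every u₀ ∈ C(0) the solution set of the sweeping process (P) with initial value u₀ is convex: if u and w are solutions of (P) with initial value u₀ and λ ∈ [0,1], then (1−λ)u + λw is a solution of (P) with initial value u₀. -/

import Mathlib

/-!
Testing the variational inequality of each of two solutions with the velocity of the other gives
`⟪A₀ U, U'⟫ ≤ 0` a.e. for `U = u - w`, which starts at `0`. Hence
`⟪A₀ U t, U t⟫ = 2 ∫₀ᵗ ⟪A₀ U, U'⟫ ≤ 0`, so `A₀ u = A₀ w` on `[0, T]` by positivity of `A₀`.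
With `A₁ = 0` the variational inequality at time `t` then involves the solution only through its
velocity and the common value `A₀ u t`, and it is preserved under convex combinations of
velocities.
-/

open MeasureTheory Set
open scoped RealInnerProductSpace

/-- `u` (with Bochner-integrable derivative `v`) is a solution of the sweeping process (P)
with velocity constraint `C`, data `A₀, A₁, f`, and initial value `u₀` on `[0,T]`. -/
def SweepSol {H : Type*} [NormedAddCommGroup H] [InnerProductSpace ℝ H]
    (T : ℝ) (A₀ A₁ : H →L[ℝ] H) (f : ℝ → H) (C : ℝ → Set H)
    (u₀ : H) (u v : ℝ → H) : Prop :=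
  IntegrableOn v (Icc 0 T) ∧
  (∀ t ∈ Icc (0:ℝ) T, u t = u₀ + ∫ τ in (0:ℝ)..t, v τ) ∧
  (∀ᵐ t ∂(volume.restrict (Icc (0:ℝ) T)),
    v t ∈ C t ∧ ∀ z ∈ C t, 0 ≤ ⟪A₁ (v t) + A₀ (u t) - f t, z - v t⟫)

theorem ae_prod_fst_ne_snd {α : Type*} [MeasurableSpace α] [MeasurableEq α]
    {μ ν : Measure α} [SFinite μ] [SFinite ν] [NullSingletonClass ν] :
    ∀ᵐ z ∂(μ.prod ν), z.1 ≠ z.2 :=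
  (Measure.ae_prod_iff_ae_ae measurableSet_diagonal.compl).2 <| ae_of_all _ fun x =>
    (measure_eq_zero_iff_ae_notMem.1 (measure_singleton x)).mono fun _ hy => Ne.symm hy

theorem integral_prod_eq_two_mul_integral_integral_Iic {μ : Measure ℝ} [SFinite μ]
    [NullSingletonClass μ] {F : ℝ × ℝ → ℝ} (hF : Integrable F (μ.prod μ))
    (hsymm : ∀ a b, F (a, b) = F (b, a)) :
    ∫ z, F z ∂(μ.prod μ) = 2 * ∫ s, ∫ r in Iic s, F (s, r) ∂μ ∂μ := by
  set S : Set (ℝ × ℝ) := {z | z.2 ≤ z.1}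
  have hS : MeasurableSet S := measurableSet_le measurable_snd measurable_fst
  -- up to the null diagonal, `Sᶜ` is the mirror image of `S`
  have hcompl : ∫ z in Sᶜ, F z ∂(μ.prod μ) = ∫ z in S, F z ∂(μ.prod μ) := by
    rw [← Measure.measurePreserving_swap.setIntegral_preimage_emb
      MeasurableEquiv.prodComm.measurableEmbedding]
    refine setIntegral_congr_set ?_ |>.trans (setIntegral_congr_fun hS fun z _ => ?_)
    · refine Filter.eventuallyEq_set.2 (ae_prod_fst_ne_snd.mono fun z hz => ?_)
      simp only [S, mem_preimage, mem_compl_iff, mem_ofPred_eq, Prod.fst_swap, Prod.snd_swap,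
        not_le]
      exact ⟨le_of_lt, fun h => lt_of_le_of_ne h (Ne.symm hz)⟩
    · exact hsymm _ _
  have hsection : ∀ s, ∫ r, S.indicator F (s, r) ∂μ = ∫ r in Iic s, F (s, r) ∂μ := fun s => by
    rw [← integral_indicator measurableSet_Iic]
    rfl
  rw [← integral_add_compl hS hF, hcompl, ← integral_indicator hS,
    integral_prod _ (hF.indicator hS)]
  simp only [hsection]
  ring

section

variable {H : Type*} [NormedAddCommGroup H] [InnerProductSpace ℝ H]

theorem ContinuousLinearMap.IsPositive.apply_eq_zero_of_inner_eq_zero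
    {A : H →L[ℝ] H} (hA : A.IsPositive) {x : H} (hx : ⟪A x, x⟫ = 0) : A x = 0 := by
  have hquad : ∀ r : ℝ, 0 ≤ ⟪A (A x), A x⟫ * (r * r) + -2 * ‖A x‖ ^ 2 * r + 0 := fun r => by
    have hAAx : ⟪A (A x), x⟫ = ⟪A x, A x⟫ := hA.inner_left_eq_inner_right (A x) x
    have hr := hA.inner_nonneg_left (x - r • A x)
    simp only [map_sub, map_smul, inner_sub_left, inner_sub_right, real_inner_smul_left,
      real_inner_smul_right, hAAx, hx, real_inner_self_eq_norm_sq] at hr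
    linarith
  have hdisc := discrim_le_zero hquad
  rw [discrim] at hdisc
  have hnorm : ‖A x‖ ^ 4 ≤ 0 := by nlinarith
  exact norm_eq_zero.1 (pow_eq_zero_iff four_ne_zero |>.1 (hnorm.antisymm (by positivity)))

theorem inner_map_integral_integral_eq_integral_prod [CompleteSpace H] {α : Type*}
    [MeasurableSpace α] {μ : Measure α} [SFinite μ] (A : H →L[ℝ] H) {d : α → H}
    (hd : Integrable d μ) :
    ⟪A (∫ s, d s ∂μ), ∫ r, d r ∂μ⟫ = ∫ z, ⟪A (d z.1), d z.2⟫ ∂(μ.prod μ) :=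
  (integral_prod_bilin ((innerSL ℝ).comp A) hd hd).symm

theorem inner_map_intervalIntegral_self_eq_two_mul_integral [CompleteSpace H]
    {A : H →L[ℝ] H} (hA : (A : H →ₗ[ℝ] H).IsSymmetric) {d : ℝ → H} {t : ℝ} (ht : 0 ≤ t)
    (hd : IntegrableOn d (Ioc 0 t)) :
    ⟪A (∫ τ in 0..t, d τ), ∫ τ in 0..t, d τ⟫
      = 2 * ∫ s in 0..t, ⟪A (∫ τ in 0..s, d τ), d s⟫ := by
  have hF : Integrable (fun z : ℝ × ℝ => ⟪A (d z.1), d z.2⟫)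
      ((volume.restrict (Ioc 0 t)).prod (volume.restrict (Ioc 0 t))) :=
    hd.op_fst_snd (op := fun x y => ⟪A x, y⟫) (by fun_prop)
      ⟨‖A‖, fun x y => (norm_inner_le_norm _ _).trans (by gcongr; exact A.le_opNorm x)⟩ hd
  have hsection : ∀ s ∈ Ioc 0 t,
      ∫ r in Iic s, ⟪A (d s), d r⟫ ∂(volume.restrict (Ioc 0 t))
        = ⟪A (∫ τ in 0..s, d τ), d s⟫ := fun s hs => by
    rw [Measure.restrict_restrict measurableSet_Iic, Iic_inter_Ioc_of_le hs.2,
      integral_inner (hd.mono_set (Ioc_subset_Ioc_right hs.2)),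
      intervalIntegral.integral_of_le hs.1.le]
    exact (hA _ _).trans (real_inner_comm _ _)
  rw [intervalIntegral.integral_of_le ht, inner_map_integral_integral_eq_integral_prod A hd,
    integral_prod_eq_two_mul_integral_integral_Iic hF
      fun _ _ => (hA _ _).trans (real_inner_comm _ _),
    setIntegral_congr_fun measurableSet_Ioc hsection, intervalIntegral.integral_of_le ht]

theorem inner_map_intervalIntegral_self_nonpos [CompleteSpace H] {A : H →L[ℝ] H}
    (hA : (A : H →ₗ[ℝ] H).IsSymmetric) {d : ℝ → H} {t : ℝ} (ht : 0 ≤ t)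
    (hd : IntegrableOn d (Ioc 0 t))
    (hneg : ∀ᵐ s ∂(volume.restrict (Ioc 0 t)), ⟪A (∫ τ in 0..s, d τ), d s⟫ ≤ 0) :
    ⟪A (∫ τ in 0..t, d τ), ∫ τ in 0..t, d τ⟫ ≤ 0 := by
  rw [inner_map_intervalIntegral_self_eq_two_mul_integral hA ht hd,
    intervalIntegral.integral_of_le ht]
  exact mul_nonpos_of_nonneg_of_nonpos two_pos.le (integral_nonpos_of_ae hneg)

namespace SweepSol

variable {T : ℝ} {A₀ A₁ : H →L[ℝ] H} {f : ℝ → H} {C : ℝ → Set H} {u₀ : H}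
  {u w v v' : ℝ → H}

theorem intervalIntegrable (hu : SweepSol T A₀ A₁ f C u₀ u v) {t : ℝ} (ht : t ∈ Icc 0 T) :
    IntervalIntegrable v volume 0 t :=
  (intervalIntegrable_iff_integrableOn_Ioc_of_le ht.1).2 <|
    hu.1.mono_set (Ioc_subset_Icc_self.trans (Icc_subset_Icc_right ht.2))

theorem sub_eq_intervalIntegral_sub (hu : SweepSol T A₀ A₁ f C u₀ u v)
    (hw : SweepSol T A₀ A₁ f C u₀ w v') {t : ℝ} (ht : t ∈ Icc 0 T) :
    u t - w t = ∫ τ in 0..t, (v τ - v' τ) := by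
  rw [intervalIntegral.integral_sub (hu.intervalIntegrable ht) (hw.intervalIntegrable ht),
    hu.2.1 t ht, hw.2.1 t ht, add_sub_add_left_eq_sub]

theorem ae_inner_sub_nonpos (hu : SweepSol T A₀ A₁ f C u₀ u v)
    (hw : SweepSol T A₀ A₁ f C u₀ w v') :
    ∀ᵐ t ∂(volume.restrict (Icc 0 T)),
      ⟪A₁ (v t - v' t) + A₀ (u t - w t), v t - v' t⟫ ≤ 0 := by
  filter_upwards [hu.2.2, hw.2.2] with t ⟨hvC, hvi⟩ ⟨hv'C, hv'i⟩
  have h₁ := hvi (v' t) hv'C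
  have h₂ := hv'i (v t) hvC
  simp only [map_sub, inner_add_left, inner_sub_left, inner_sub_right] at h₁ h₂ ⊢
  linarith

theorem map_eq_of_isPositive [CompleteSpace H] (hA₀ : A₀.IsPositive) (hA₁ : A₁.IsPositive)
    (hu : SweepSol T A₀ A₁ f C u₀ u v) (hw : SweepSol T A₀ A₁ f C u₀ w v') {t : ℝ}
    (ht : t ∈ Icc 0 T) : A₀ (u t) = A₀ (w t) := by
  have hIoc : ∀ {s}, s ∈ Icc 0 T → Ioc 0 s ⊆ Icc 0 T := fun hs =>
    Ioc_subset_Icc_self.trans (Icc_subset_Icc_right hs.2)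
  have hneg : ∀ᵐ s ∂(volume.restrict (Ioc 0 t)),
      ⟪A₀ (∫ τ in 0..s, (v τ - v' τ)), v s - v' s⟫ ≤ 0 := by
    filter_upwards [ae_restrict_of_ae_restrict_of_subset (hIoc ht) (hu.ae_inner_sub_nonpos hw),
      ae_restrict_mem measurableSet_Ioc] with s hs hsIoc
    rw [← hu.sub_eq_intervalIntegral_sub hw (hIoc ht hsIoc)]
    rw [inner_add_left] at hs
    linarith [hA₁.inner_nonneg_left (v s - v' s)]
  have hquad := inner_map_intervalIntegral_self_nonpos (d := fun τ => v τ - v' τ)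
    hA₀.isSymmetric ht.1 ((hu.1.sub hw.1).mono_set (hIoc ht)) hneg
  rw [← hu.sub_eq_intervalIntegral_sub hw ht] at hquad
  rw [← sub_eq_zero, ← map_sub]
  exact hA₀.apply_eq_zero_of_inner_eq_zero (hquad.antisymm (hA₀.inner_nonneg_left _))

theorem convex_combination (hu : SweepSol T A₀ A₁ f C u₀ u v)
    (hw : SweepSol T A₀ A₁ f C u₀ w v') (hC : ∀ t ∈ Icc 0 T, Convex ℝ (C t))
    (hforce : ∀ᵐ t ∂(volume.restrict (Icc 0 T)),
      A₁ (v t) + A₀ (u t) = A₁ (v' t) + A₀ (w t))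
    {lam : ℝ} (hlam : lam ∈ Icc 0 1) :
    SweepSol T A₀ A₁ f C u₀ (fun t => (1 - lam) • u t + lam • w t)
      (fun t => (1 - lam) • v t + lam • v' t) := by
  have hlam' : 0 ≤ 1 - lam := sub_nonneg.2 hlam.2
  refine ⟨(hu.1.smul (1 - lam)).add (hw.1.smul lam), fun t ht => ?_, ?_⟩
  · dsimp only
    rw [intervalIntegral.integral_add (f := fun τ => (1 - lam) • v τ) (g := fun τ => lam • v' τ)
      ((hu.intervalIntegrable ht).smul (1 - lam)) ((hw.intervalIntegrable ht).smul lam),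
      intervalIntegral.integral_smul,
      intervalIntegral.integral_smul, hu.2.1 t ht, hw.2.1 t ht]
    module
  · filter_upwards [hu.2.2, hw.2.2, hforce, ae_restrict_mem measurableSet_Icc]
      with t ⟨hvC, hvi⟩ ⟨hv'C, hv'i⟩ hft ht
    refine ⟨hC t ht hvC hv'C hlam' hlam.1 (sub_add_cancel 1 lam), fun z hz => ?_⟩
    have hforce_comb : A₁ ((1 - lam) • v t + lam • v' t) + A₀ ((1 - lam) • u t + lam • w t) - f t
        = A₁ (v t) + A₀ (u t) - f t := by
      simp only [map_add, map_smul]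
      linear_combination (norm := module) (-lam) • hft
    have hz' : z - ((1 - lam) • v t + lam • v' t)
        = (1 - lam) • (z - v t) + lam • (z - v' t) := by
      module
    rw [hforce_comb, hz', inner_add_right, real_inner_smul_right, real_inner_smul_right]
    rw [← hft] at hv'i
    exact add_nonneg (mul_nonneg hlam' (hvi z hz)) (mul_nonneg hlam.1 (hv'i z hz))

end SweepSol

end

theorem solution_set_convex_of_A1_eq_zero_f_perp_ker_general
    {H : Type*} [NormedAddCommGroup H] [InnerProductSpace ℝ H] [CompleteSpace H]
    (T : ℝ) (A₀ A₁ : H →L[ℝ] H)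
    (hA₀sym : ∀ x y : H, ⟪A₀ x, y⟫ = ⟪x, A₀ y⟫)
    (hA₀pos : ∀ x : H, 0 ≤ ⟪A₀ x, x⟫)
    (hA₁ : A₁ = 0)
    (f : ℝ → H)
    (C : ℝ → Set H)
    (hC : ∀ t ∈ Icc (0:ℝ) T, (C t).Nonempty ∧ IsClosed (C t) ∧ Convex ℝ (C t))
    (u₀ : H)
    (u w vu vw : ℝ → H)
    (hu : SweepSol T A₀ A₁ f C u₀ u vu)
    (hw : SweepSol T A₀ A₁ f C u₀ w vw)
    (lam : ℝ) (hlam : lam ∈ Icc (0:ℝ) 1) :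
    ∃ v : ℝ → H,
      SweepSol T A₀ A₁ f C u₀ (fun t => (1 - lam) • u t + lam • w t) v := by
  subst hA₁
  have hA₀ : A₀.IsPositive := ⟨hA₀sym, hA₀pos⟩
  have hforce : ∀ᵐ t ∂(volume.restrict (Icc 0 T)),
      (0 : H →L[ℝ] H) (vu t) + A₀ (u t) = (0 : H →L[ℝ] H) (vw t) + A₀ (w t) := by
    filter_upwards [ae_restrict_mem measurableSet_Icc] with t ht
    simp only [zero_apply, zero_add]
    exact hu.map_eq_of_isPositive hA₀ ContinuousLinearMap.isPositive_zero hw ht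
  exact ⟨_, hu.convex_combination hw (fun t ht => (hC t ht).2.2) hforce hlam⟩

theorem solution_set_convex_of_A1_eq_zero_f_perp_ker
    {H : Type*} [NormedAddCommGroup H] [InnerProductSpace ℝ H] [CompleteSpace H]
    (T : ℝ) (hT : 0 < T) (A₀ A₁ : H →L[ℝ] H)
    (hA₀sym : ∀ x y : H, ⟪A₀ x, y⟫ = ⟪x, A₀ y⟫)
    (hA₀pos : ∀ x : H, 0 ≤ ⟪A₀ x, x⟫)
    (hA₁ : A₁ = 0)
    (f : ℝ → H) (hf : ContinuousOn f (Icc 0 T))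
    (hperp : ∀ t ∈ Icc (0:ℝ) T, ∀ x : H, A₀ x = 0 → ⟪f t, x⟫ = 0)
    (C : ℝ → Set H)
    (hC : ∀ t ∈ Icc (0:ℝ) T, (C t).Nonempty ∧ IsClosed (C t) ∧ Convex ℝ (C t))
    (u₀ : H) (hu₀ : u₀ ∈ C 0)
    (u w vu vw : ℝ → H)
    (hu : SweepSol T A₀ A₁ f C u₀ u vu)
    (hw : SweepSol T A₀ A₁ f C u₀ w vw)
    (lam : ℝ) (hlam : lam ∈ Icc (0:ℝ) 1) :
    ∃ v : ℝ → H,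
      SweepSol T A₀ A₁ f C u₀ (fun t => (1 - lam) • u t + lam • w t) v :=
  solution_set_convex_of_A1_eq_zero_f_perp_ker_general T A₀ A₁ hA₀sym hA₀pos hA₁ f C hC u₀ u w vu vw
    hu hw lam hlam
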